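/- arXiv:1006.4372 — 3 statements merged into one kernel-verified Lean document; each statement's English description precedes it below -/
import Mathlib

section
/- Let a ≥ 3 be an odd integer, b̌ ≥ 0 a rational number, and m_1, ..., m_N integers with 2 ≤ m_i ≤ (a+1)/2 for all i. Define K2 = 2a(a + b̌) − Σ_{i=1}^N (m_i − 1)^2 and g = (a+1)(a+1+b̌) − (1/2)Σ_{i=1}^N m_i(m_i − 1). Then K2 ≥ 2g(a−1)/(a+1) + 2, and if equality holds then b̌ = 0. -/
/-- Inequality (2.8): for `a ≥ 3` odd, `bq ≥ 0` and multiplicities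
`2 ≤ m_i ≤ (a+1)/2`, one has `K2 ≥ 2g(a-1)/(a+1) + 2`, with `bq = 0` in case of
equality. -/
theorem stmt_5 (a : ℤ) (ha : 3 ≤ a) (hodd : Odd a) (bq : ℚ) (hb : 0 ≤ bq)
    (N : ℕ) (m : Fin N → ℤ) (hlo : ∀ i, 2 ≤ m i) (hhi : ∀ i, 2 * m i ≤ a + 1)
    (K2 g : ℚ)
    (hK2 : K2 = 2 * (a : ℚ) * ((a : ℚ) + bq) - ∑ i, ((m i : ℚ) - 1) ^ 2)
    (hg : g = ((a : ℚ) + 1) * ((a : ℚ) + 1 + bq)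
            - (1 / 2) * ∑ i, (m i : ℚ) * ((m i : ℚ) - 1)) :
    2 * g * ((a : ℚ) - 1) / ((a : ℚ) + 1) + 2 ≤ K2
      ∧ (K2 = 2 * g * ((a : ℚ) - 1) / ((a : ℚ) + 1) + 2 → bq = 0) := by
  have ha1 : (0 : ℚ) < (a : ℚ) + 1 := by
    have : (3 : ℚ) ≤ (a : ℚ) := by exact_mod_cast ha
    linarith
  set S : ℚ := (∑ i, ((m i : ℚ) - 1) * ((a : ℚ) + 1 - 2 * (m i : ℚ))) / ((a : ℚ) + 1)
    with hS
  have hSnn : 0 ≤ S := by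
    apply div_nonneg _ ha1.le
    apply Finset.sum_nonneg
    intro i _
    have h1 : (2 : ℚ) ≤ (m i : ℚ) := by exact_mod_cast hlo i
    have h2 : 2 * (m i : ℚ) ≤ (a : ℚ) + 1 := by exact_mod_cast hhi i
    nlinarith
  have hsum : ∑ i, ((m i : ℚ) - 1) * ((a : ℚ) + 1 - 2 * (m i : ℚ))
      = ((a : ℚ) - 1) * ∑ i, (m i : ℚ) * ((m i : ℚ) - 1)
        - ((a : ℚ) + 1) * ∑ i, ((m i : ℚ) - 1) ^ 2 := by
    rw [Finset.mul_sum, Finset.mul_sum, ← Finset.sum_sub_distrib]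
    exact Finset.sum_congr rfl fun i _ => by ring
  have key : K2 = 2 * g * ((a : ℚ) - 1) / ((a : ℚ) + 1) + 2 + 2 * bq + S := by
    rw [hK2, hg, hS, hsum]
    field_simp
    ring
  constructor
  · rw [key]; linarith
  · intro h
    rw [key] at h
    have : 2 * bq + S = 0 := by linarith
    linarith
end

section
/- Let a ≥ 2 be an even integer, b̌ ≥ 0 an integer, N ≥ 0, and m_1 ≥ m_2 ≥ ... ≥ m_N ≥ 2 integers with m_1 ≤ (a+2)/2. Define K2 = 2a(a+b̌) − Σ(m_i−1)^2, g = (a+1)(a+1+b̌) − (1/2)Σ m_i(m_i−1), G2 = 2(a+2)(a+2+b̌) − Σ m_i^2. Suppose g = 2, 1 ≤ K2 ≤ 3 and G2 ≥ 0. Then (a, b̌, N, (m_i), K2) is one of: (2,0,7,(2,...,2),1), (2,1,10,(2,...,2),2), (4,0,9,(3,3,3,3,3,3,3,2,2),2), (6,1,9,(4,...,4),3), or (8,0,9,(5,5,5,5,5,5,5,4,3),3). -/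
lemma sum9' {β : Type*} [AddCommMonoid β] (f : Fin 9 → β) :
    ∑ i, f i = f 0 + f 1 + f 2 + f 3 + f 4 + f 5 + f 6 + f 7 + f 8 := by
  rw [Fin.sum_univ_castSucc, Fin.sum_univ_eight]
  rfl

set_option maxHeartbeats 2000000 in
/-- Numerical classification of Lemma 3.2 for #-minimal models of general type
of genus-two fibrations with `(K_X+F)^2 > 0`. -/
theorem stmt_8 (a bq : ℤ) (ha : 2 ≤ a) (heven : Even a) (hb : 0 ≤ bq)
    (N : ℕ) (m : Fin N → ℤ)
    (hsort : ∀ i j : Fin N, i ≤ j → m j ≤ m i)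
    (hlo : ∀ i, 2 ≤ m i) (hhi : ∀ i, 2 * m i ≤ a + 2)
    (K2 g G2 : ℚ)
    (hK2 : K2 = 2 * (a : ℚ) * ((a : ℚ) + (bq : ℚ)) - ∑ i, ((m i : ℚ) - 1) ^ 2)
    (hg : g = ((a : ℚ) + 1) * ((a : ℚ) + 1 + (bq : ℚ))
            - (1 / 2) * ∑ i, (m i : ℚ) * ((m i : ℚ) - 1))
    (hG2 : G2 = 2 * ((a : ℚ) + 2) * ((a : ℚ) + 2 + (bq : ℚ)) - ∑ i, (m i : ℚ) ^ 2)
    (hg2 : g = 2) (hK1 : 1 ≤ K2) (hK3 : K2 ≤ 3) (hG : 0 ≤ G2) :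
    (a = 2 ∧ bq = 0 ∧ N = 7 ∧ (∀ i, m i = 2) ∧ K2 = 1) ∨
    (a = 2 ∧ bq = 1 ∧ N = 10 ∧ (∀ i, m i = 2) ∧ K2 = 2) ∨
    (a = 4 ∧ bq = 0 ∧ N = 9 ∧ (∀ i : Fin N, m i = if (i : ℕ) < 7 then 3 else 2) ∧ K2 = 2) ∨
    (a = 6 ∧ bq = 1 ∧ N = 9 ∧ (∀ i, m i = 4) ∧ K2 = 3) ∨
    (a = 8 ∧ bq = 0 ∧ N = 9 ∧
      (∀ i : Fin N, m i = if (i : ℕ) < 7 then 5 else if (i : ℕ) < 8 then 4 else 3)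
      ∧ K2 = 3) := by
  obtain ⟨c, hc⟩ := heven
  subst hc
  have hc1 : 1 ≤ c := by omega
  -- cast bridges
  have cSM : ((∑ i, m i : ℤ) : ℚ) = ∑ i, (m i : ℚ) := by push_cast; rfl
  have cSQ : ((∑ i, (m i)^2 : ℤ) : ℚ) = ∑ i, (m i : ℚ)^2 := by push_cast; rfl
  have e1 : ∑ i, (m i : ℚ) * ((m i : ℚ) - 1) = ∑ i, (m i : ℚ)^2 - ∑ i, (m i : ℚ) := by
    rw [← Finset.sum_sub_distrib]; exact Finset.sum_congr rfl fun i _ => by ring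
  have e2 : ∑ i, ((m i : ℚ) - 1)^2 = ∑ i, (m i : ℚ)^2 - 2 * ∑ i, (m i : ℚ) + N := by
    rw [Finset.sum_congr rfl (fun i _ => by ring :
      ∀ i ∈ Finset.univ, ((m i : ℚ) - 1)^2 = (m i : ℚ)^2 - 2 * (m i : ℚ) + 1)]
    rw [Finset.sum_add_distrib, Finset.sum_sub_distrib, ← Finset.mul_sum]
    simp [Finset.card_univ]
  have hE1 : (∑ i, (m i)^2) - ∑ i, m i = 2*(c+c+1)*(c+c+1+bq) - 4 := by
    have h := hg2
    rw [hg, e1] at h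
    rw [← @Int.cast_inj ℚ]
    push_cast
    rw [cSM, cSQ] at *
    push_cast at h ⊢
    linarith
  obtain ⟨k, hkdef⟩ : ∃ k : ℤ,
      k = 2*(c+c)*(c+c+bq) - ((∑ i, (m i)^2) - 2*(∑ i, m i) + (N:ℤ)) := ⟨_, rfl⟩
  have hKk : K2 = (k : ℚ) := by
    rw [hK2, e2, hkdef]
    push_cast
    ring
  have hk1 : 1 ≤ k := by exact_mod_cast hKk ▸ hK1
  have hk3 : k ≤ 3 := by exact_mod_cast hKk ▸ hK3
  have hE3 : (∑ i, (m i)^2) ≤ 2*(c+c+2)*(c+c+2+bq) := by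
    rw [hG2] at hG
    rw [← @Int.cast_le ℚ]
    push_cast at hG ⊢
    linarith
  -- basic bounds
  have hub : ∀ i, m i ≤ c + 1 := fun i => by have := hhi i; omega
  have hSM : ∑ i, m i = (N:ℤ) + k + 8*c + 2*bq - 2 := by linear_combination hE1 - hkdef
  have hPb : ∑ i, m i ≤ (c+1) * (N:ℤ) := by
    calc ∑ i, m i ≤ ∑ _i : Fin N, (c+1) := Finset.sum_le_sum (fun i _ => hub i)
    _ = (c+1) * N := by simp [Finset.sum_const, Finset.card_univ]; ring
  have hWnn : 0 ≤ ∑ i, (c+1 - m i)*(m i - 2) :=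
    Finset.sum_nonneg fun i _ => mul_nonneg (by have := hub i; omega) (by have := hlo i; omega)
  have hWs : ∑ i, (c+1 - m i)*(m i - 2)
      = (c+3) * (∑ i, m i) - (∑ i, (m i)^2) - (2*c+2)*(N:ℤ) := by
    rw [Finset.sum_congr rfl (fun i _ => by ring :
      ∀ i ∈ Finset.univ, (c+1 - m i)*(m i - 2) = ((c+3) * m i - (m i)^2 - (2*c+2)))]
    rw [Finset.sum_sub_distrib, Finset.sum_sub_distrib, ← Finset.mul_sum, Finset.sum_const]
    simp [Finset.card_univ]; ring
  have hWeq : ∑ i, (c+1 - m i)*(m i - 2)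
      = k*c + 2*k + 6*c + 2*bq - 2*bq*c - 2 - c*(N:ℤ) := by
    rw [hWs]; linear_combination (c+2)*hSM - hE1
  have hNk : (N:ℤ) ≤ 12 - k := by nlinarith [hE3, hE1, hSM]
  have hM : 2*c*(bq+1) ≤ k*(c+1) := by nlinarith [hWnn, hWeq, hPb, hSM]
  rcases eq_or_lt_of_le hc1 with hce | hc2
  · -- c = 1 : every m i = 2
    obtain rfl : c = 1 := hce.symm
    have hall : ∀ i, m i = 2 := fun i => by have h1 := hlo i; have h2 := hhi i; omega
    have hSM2 : ∑ i, m i = 2*(N:ℤ) := by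
      rw [Finset.sum_congr rfl fun i _ => hall i, Finset.sum_const]
      simp [Finset.card_univ]; ring
    have hSQ2 : ∑ i, (m i)^2 = 4*(N:ℤ) := by
      rw [Finset.sum_congr rfl (fun i _ => by rw [hall i]; norm_num :
        ∀ i ∈ Finset.univ, (m i)^2 = 4), Finset.sum_const]
      simp [Finset.card_univ]; ring
    have hn : (N:ℤ) = 3*bq + 7 := by linarith [hE1, hSQ2, hSM2]
    have hkv : k = bq + 1 := by linarith [hSM, hSM2, hn]
    have hble : bq ≤ 1 := by linarith [hNk]
    interval_cases bq
    · left
      refine ⟨by norm_num, rfl, ?_, hall, ?_⟩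
      · have : (N:ℤ) = 7 := by omega
        exact_mod_cast this
      · rw [hKk, hkv]; norm_num
    · right; left
      refine ⟨by norm_num, rfl, ?_, hall, ?_⟩
      · have : (N:ℤ) = 10 := by omega
        exact_mod_cast this
      · rw [hKk, hkv]; norm_num
  · -- 2 ≤ c
    have hble : bq ≤ 1 := by
      by_contra hh
      push_neg at hh
      nlinarith [hM, mul_le_mul_of_nonneg_right hk3 (show (0:ℤ) ≤ c + 1 by linarith),
        mul_nonneg (show (0:ℤ) ≤ c by linarith) (show (0:ℤ) ≤ bq - 2 by linarith)]
    interval_cases bq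
    · -- bq = 0
      have hk2' : 2 ≤ k := by
        by_contra hh
        push_neg at hh
        have hkv : k = 1 := by omega
        rw [hkv] at hM
        linarith
      rcases (by omega : k = 2 ∨ k = 3) with hkv | hkv
      · -- k = 2
        subst hkv
        have h8 : 8 ≤ (N:ℤ) := by
          by_contra hh
          push_neg at hh
          have h7 : (N:ℤ) ≤ 7 := by omega
          nlinarith [hPb, hSM, mul_le_mul_of_nonneg_left h7 (show (0:ℤ) ≤ c by linarith)]
        rcases (by omega : c = 2 ∨ 3 ≤ c) with hcv | hcv
        · -- c = 2 : case (a,b) = (4,0)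
          subst hcv
          have hSQe : ∑ i, (m i)^2 = 5 * (∑ i, m i) - 6 * (N:ℤ) := by
            rw [Finset.sum_congr rfl (fun i _ => by
              have h1 := hlo i; have h2 := hub i
              have hv : m i = 2 ∨ m i = 3 := by omega
              rcases hv with h | h <;> rw [h] <;> norm_num :
              ∀ i ∈ Finset.univ, (m i)^2 = 5 * m i - 6)]
            rw [Finset.sum_sub_distrib, ← Finset.mul_sum, Finset.sum_const]
            simp [Finset.card_univ]
            try ring
          have hn9 : (N:ℤ) = 9 := by linarith [hE1, hSM, hSQe]
          have hN9 : N = 9 := by exact_mod_cast hn9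
          subst hN9
          have hSMe : m 0 + m 1 + m 2 + m 3 + m 4 + m 5 + m 6 + m 7 + m 8 = 25 := by
            rw [← sum9' m]
            push_cast at hSM
            linarith [hSM]
          have s01 := hsort 0 1 (by decide); have s12 := hsort 1 2 (by decide)
          have s23 := hsort 2 3 (by decide); have s34 := hsort 3 4 (by decide)
          have s45 := hsort 4 5 (by decide); have s56 := hsort 5 6 (by decide)
          have s67 := hsort 6 7 (by decide); have s78 := hsort 7 8 (by decide)
          have b0 := hlo 0; have b8 := hlo 8
          have v0 := hub 0; have v1 := hub 1; have v2 := hub 2; have v3 := hub 3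
          have v4 := hub 4; have v5 := hub 5; have v6 := hub 6; have v7 := hub 7
          have v8 := hub 8
          have key : m 0 = 3 ∧ m 1 = 3 ∧ m 2 = 3 ∧ m 3 = 3 ∧ m 4 = 3 ∧ m 5 = 3 ∧
              m 6 = 3 ∧ m 7 = 2 ∧ m 8 = 2 := by omega
          right; right; left
          refine ⟨by norm_num, rfl, rfl, ?_, by rw [hKk]; norm_num⟩
          intro i
          fin_cases i <;> simp <;> omega
        · -- 3 ≤ c : impossible
          exfalso
          have h9 : (N:ℤ) ≤ 8 := by
            by_contra hh
            push_neg at hh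
            have h9' : 9 ≤ (N:ℤ) := hh
            nlinarith [hWnn, hWeq, mul_le_mul_of_nonneg_left h9' (show (0:ℤ) ≤ c by linarith)]
          have hn8 : (N:ℤ) = 8 := le_antisymm h9 h8
          have hN8 : N = 8 := by exact_mod_cast hn8
          subst hN8
          have hsum0 : ∑ i, (c + 1 - m i) = 0 := by
            have e : ∑ i, (c + 1 - m i) = (c+1) * ((8:ℕ):ℤ) - ∑ i, m i := by
              rw [Finset.sum_sub_distrib, Finset.sum_const]
              simp [Finset.card_univ]
              try ring
            rw [e]
            push_cast at hSM ⊢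
            linarith [hSM]
          have hall : ∀ i, m i = c + 1 := fun i => by
            have := (Finset.sum_eq_zero_iff_of_nonneg
              (fun i _ => by have := hub i; omega)).mp hsum0 i (Finset.mem_univ i)
            omega
          have hSQ8 : ∑ i, (m i)^2 = 8 * (c+1)^2 := by
            rw [Finset.sum_congr rfl (fun i _ => by rw [hall i] :
              ∀ i ∈ Finset.univ, (m i)^2 = (c+1)^2), Finset.sum_const]
            simp [Finset.card_univ]
            try ring
          push_cast at hSM
          nlinarith [hE1, hSM, hSQ8]
      · -- k = 3
        subst hkv
        have hn9 : (N:ℤ) = 9 := by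
          have h9 : 9 ≤ (N:ℤ) := by
            by_contra hh
            push_neg at hh
            have h8 : (N:ℤ) ≤ 8 := by omega
            nlinarith [hPb, hSM, mul_le_mul_of_nonneg_left h8 (show (0:ℤ) ≤ c by linarith)]
          omega
        have hN9 : N = 9 := by exact_mod_cast hn9
        subst hN9
        have hSMv : ∑ i, m i = 8*c + 10 := by push_cast at hSM; linarith [hSM]
        obtain ⟨u, hu⟩ : ∃ u : Fin 9 → ℤ, ∀ i, u i = c + 1 - m i := ⟨_, fun _ => rfl⟩
        have hu0 : ∀ i, 0 ≤ u i := fun i => by rw [hu i]; have := hub i; omega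
        have huc : ∀ i, u i ≤ c - 1 := fun i => by rw [hu i]; have := hlo i; omega
        have hsu : ∑ i, u i = c - 1 := by
          rw [Finset.sum_congr rfl fun i _ => hu i, Finset.sum_sub_distrib, Finset.sum_const]
          simp [Finset.card_univ]
          linarith [hSMv]
        have hsq : ∑ i, (u i)^2 = c^2 - 2*c - 3 := by
          rw [Finset.sum_congr rfl (fun i _ => by rw [hu i]; ring :
            ∀ i ∈ Finset.univ, (u i)^2 = ((c+1)^2 - (2*(c+1))*(m i)) + (m i)^2)]
          rw [Finset.sum_add_distrib, Finset.sum_sub_distrib, ← Finset.mul_sum, Finset.sum_const]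
          simp [Finset.card_univ]
          linear_combination hE1 - (2*c+1)*hSMv
        rcases (by omega : c = 2 ∨ c = 3 ∨ c = 4 ∨ c = 5 ∨ 6 ≤ c) with hcv|hcv|hcv|hcv|hcv
        · -- c = 2 : impossible
          exfalso
          subst hcv
          have hnn := Finset.sum_nonneg (fun i (_ : i ∈ Finset.univ) => sq_nonneg (u i))
          rw [hsq] at hnn
          norm_num at hnn
        · -- c = 3 : impossible
          exfalso
          subst hcv
          have hz := (Finset.sum_eq_zero_iff_of_nonneg
            (fun i (_ : i ∈ Finset.univ) => sq_nonneg (u i))).mp (by rw [hsq]; norm_num)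
          have h0 : ∑ i, u i = 0 := Finset.sum_eq_zero (fun i _ => by
            have := hz i (Finset.mem_univ i)
            exact sq_eq_zero_iff.mp this)
          rw [hsu] at h0
          norm_num at h0
        · -- c = 4 : case (a,b) = (8,0)
          subst hcv
          have hW4 : ∑ i, (4 + 1 - m i)*(m i - 2) = 4 := by
            rw [hWeq]; push_cast; try norm_num
          have hSMe : m 0 + m 1 + m 2 + m 3 + m 4 + m 5 + m 6 + m 7 + m 8 = 42 := by
            rw [← sum9' m]; linarith [hSMv]
          have s01 := hsort 0 1 (by decide); have s12 := hsort 1 2 (by decide)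
          have s23 := hsort 2 3 (by decide); have s34 := hsort 3 4 (by decide)
          have s45 := hsort 4 5 (by decide); have s56 := hsort 5 6 (by decide)
          have s67 := hsort 6 7 (by decide); have s78 := hsort 7 8 (by decide)
          have b6 := hlo 6; have b7 := hlo 7; have b8 := hlo 8
          have v0 := hub 0; have v1 := hub 1; have v2 := hub 2; have v3 := hub 3
          have v4 := hub 4; have v5 := hub 5; have v6 := hub 6; have v7 := hub 7
          have v8 := hub 8
          rw [sum9'] at hW4
          have h5 : m 0 = 5 ∧ m 1 = 5 ∧ m 2 = 5 ∧ m 3 = 5 ∧ m 4 = 5 ∧ m 5 = 5 := by omega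
          obtain ⟨e0, e1', e2', e3, e4, e5⟩ := h5
          rw [e0, e1', e2', e3, e4, e5] at hSMe hW4
          have d6 : m 6 = 2 ∨ m 6 = 3 ∨ m 6 = 4 ∨ m 6 = 5 := by omega
          have d7 : m 7 = 2 ∨ m 7 = 3 ∨ m 7 = 4 ∨ m 7 = 5 := by omega
          have d8 : m 8 = 2 ∨ m 8 = 3 ∨ m 8 = 4 ∨ m 8 = 5 := by omega
          have h678 : m 6 = 5 ∧ m 7 = 4 ∧ m 8 = 3 := by
            rcases d6 with h6 | h6 | h6 | h6 <;> rcases d7 with h7 | h7 | h7 | h7 <;>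
              rcases d8 with h8' | h8' | h8' | h8' <;> rw [h6, h7, h8'] at hSMe hW4 <;> omega
          right; right; right; right
          refine ⟨by norm_num, rfl, rfl, ?_, by rw [hKk]; norm_num⟩
          have key : m 0 = 5 ∧ m 1 = 5 ∧ m 2 = 5 ∧ m 3 = 5 ∧ m 4 = 5 ∧ m 5 = 5 ∧
              m 6 = 5 ∧ m 7 = 4 ∧ m 8 = 3 :=
            ⟨e0, e1', e2', e3, e4, e5, h678.1, h678.2.1, h678.2.2⟩
          intro i
          fin_cases i <;> simp <;> omega
        · -- c = 5 : impossible
          exfalso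
          subst hcv
          have hmax : ∀ i, u i ≤ u 8 := fun i => by
            rw [hu i, hu 8]
            have := hsort i (Fin.last 8) (Fin.le_last i)
            have h8l : m (Fin.last 8) = m 8 := rfl
            omega
          have hA : ∑ i, (u i)^2 ≤ u 8 * ∑ i, u i := by
            rw [Finset.mul_sum]
            refine Finset.sum_le_sum fun i _ => ?_
            have h1 := hu0 i; have h2 := hmax i
            nlinarith
          have hB : (u 8)^2 ≤ ∑ i, (u i)^2 :=
            Finset.single_le_sum (fun i (_ : i ∈ Finset.univ) => sq_nonneg (u i))
              (Finset.mem_univ 8)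
          rw [hsq] at hB
          rw [hsu, hsq] at hA
          norm_num at hA hB
          have hu8 : u 8 = 3 := by nlinarith [hu0 8]
          have hsuE := hsu
          rw [sum9'] at hsuE
          have w01 : u 0 ≤ u 1 := by rw [hu 0, hu 1]; have := hsort 0 1 (by decide); omega
          have w12 : u 1 ≤ u 2 := by rw [hu 1, hu 2]; have := hsort 1 2 (by decide); omega
          have w23 : u 2 ≤ u 3 := by rw [hu 2, hu 3]; have := hsort 2 3 (by decide); omega
          have w34 : u 3 ≤ u 4 := by rw [hu 3, hu 4]; have := hsort 3 4 (by decide); omega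
          have w45 : u 4 ≤ u 5 := by rw [hu 4, hu 5]; have := hsort 4 5 (by decide); omega
          have w56 : u 5 ≤ u 6 := by rw [hu 5, hu 6]; have := hsort 5 6 (by decide); omega
          have w67 : u 6 ≤ u 7 := by rw [hu 6, hu 7]; have := hsort 6 7 (by decide); omega
          have w78 : u 7 ≤ u 8 := by rw [hu 7, hu 8]; have := hsort 7 8 (by decide); omega
          have z0 := hu0 0
          have hvals : u 0 = 0 ∧ u 1 = 0 ∧ u 2 = 0 ∧ u 3 = 0 ∧ u 4 = 0 ∧ u 5 = 0 ∧
              u 6 = 0 ∧ u 7 = 1 := by omega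
          obtain ⟨g0, g1, g2, g3, g4, g5, g6, g7⟩ := hvals
          have hsqE := hsq
          rw [sum9'] at hsqE
          rw [g0, g1, g2, g3, g4, g5, g6, g7, hu8] at hsqE
          norm_num at hsqE
        · -- 6 ≤ c : impossible
          exfalso
          have hmax : ∀ i, u i ≤ u 8 := fun i => by
            rw [hu i, hu 8]
            have := hsort i (Fin.last 8) (Fin.le_last i)
            have h8l : m (Fin.last 8) = m 8 := rfl
            omega
          have hA : ∑ i, (u i)^2 ≤ u 8 * ∑ i, u i := by
            rw [Finset.mul_sum]
            refine Finset.sum_le_sum fun i _ => ?_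
            have h1 := hu0 i; have h2 := hmax i
            nlinarith
          have hB : (u 8)^2 ≤ ∑ i, (u i)^2 :=
            Finset.single_le_sum (fun i (_ : i ∈ Finset.univ) => sq_nonneg (u i))
              (Finset.mem_univ 8)
          rw [hsq] at hB
          rw [hsu, hsq] at hA
          have hc8 : u 8 ≤ c - 2 := by
            by_contra hh
            push_neg at hh
            have h1 : c - 1 ≤ u 8 := by omega
            nlinarith [hB, mul_le_mul h1 h1 (by linarith) (by linarith [hu0 8])]
          nlinarith [hA, mul_le_mul_of_nonneg_right hc8 (show (0:ℤ) ≤ c - 1 by linarith)]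
    · -- bq = 1
      have hkv : k = 3 := by
        by_contra hh
        have h2 : k ≤ 2 := by omega
        nlinarith [hM, mul_le_mul_of_nonneg_right h2 (show (0:ℤ) ≤ c + 1 by linarith)]
      subst hkv
      have hc3 : c ≤ 3 := by nlinarith [hM]
      rcases (by omega : c = 2 ∨ c = 3) with hcv | hcv
      · -- c = 2 : impossible
        subst hcv
        exfalso
        linarith [hPb, hSM, hNk]
      · -- c = 3 : case (a,b) = (6,1)
        subst hcv
        have hn9 : (N:ℤ) = 9 := by linarith [hPb, hSM, hNk]
        have hN9 : N = 9 := by exact_mod_cast hn9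
        subst hN9
        have hsum0 : ∑ i, (3 + 1 - m i) = 0 := by
          have e : ∑ i, (3 + 1 - m i) = 4 * ((9:ℕ):ℤ) - ∑ i, m i := by
            rw [Finset.sum_sub_distrib, Finset.sum_const]
            simp [Finset.card_univ]
            try ring
          rw [e]
          push_cast at hSM ⊢
          linarith [hSM]
        have hall : ∀ i, m i = 4 := fun i => by
          have := (Finset.sum_eq_zero_iff_of_nonneg
            (fun i _ => by have := hub i; omega)).mp hsum0 i (Finset.mem_univ i)
          omega
        right; right; right; left
        refine ⟨by norm_num, rfl, rfl, hall, by rw [hKk]; norm_num⟩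
end

section
/- Let L = Zℓ ⊕ Ze_1 ⊕ ... ⊕ Ze_10 with ℓ^2 = 1, e_i^2 = −1, and mixed products zero. Set K = −3ℓ + Σe_i, Γ = ℓ − e_1, F = 13ℓ − 5e_1 − 4Σ_{i=2}^{10} e_i. If R ∈ L satisfies R^2 = 0, K·R = −2, and Γ·R ≥ 0, then F·R ≥ 8 = F·Γ, with equality if and only if Γ·R = 0. -/
/-- Intersection form on `Zℓ ⊕ Ze_1 ⊕ ... ⊕ Ze_n`. -/
def ip {n : ℕ} (x y : ℤ × (Fin n → ℤ)) : ℤ := x.1 * y.1 - ∑ i, x.2 i * y.2 i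

/-- Lemma 3.5 in case (C): if `R² = 0`, `K·R = -2` and `Γ·R ≥ 0`, then
`F·R ≥ 8 = F·Γ`, with equality iff `Γ·R = 0`. -/
theorem stmt_12
    (K : ℤ × (Fin 10 → ℤ)) (hK : K = (-3, fun _ => 1))
    (Γ : ℤ × (Fin 10 → ℤ)) (hΓ : Γ = (1, fun i => if i = 0 then -1 else 0))
    (F : ℤ × (Fin 10 → ℤ)) (hF : F = (13, fun i => if i = 0 then -5 else -4))
    (R : ℤ × (Fin 10 → ℤ))
    (hR2 : ip R R = 0) (hKR : ip K R = -2) (hΓR : 0 ≤ ip Γ R) :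
    8 ≤ ip F R ∧ ip F Γ = 8 ∧ (ip F R = 8 ↔ ip Γ R = 0) := by
  subst hK hΓ hF
  have key : ip (13, fun i : Fin 10 => if i = 0 then (-5 : ℤ) else -4) R
      = -4 * ip ((-3 : ℤ), fun _ : Fin 10 => (1 : ℤ)) R
        + ip ((1 : ℤ), fun i : Fin 10 => if i = 0 then (-1 : ℤ) else 0) R := by
    simp [ip, Fin.sum_univ_succ, Fin.succ_ne_zero]
    ring
  rw [key, hKR]
  refine ⟨by linarith, ?_, by constructor <;> intro h <;> linarith⟩
  simp [ip, Fin.sum_univ_succ, Fin.succ_ne_zero]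
end
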